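/- Let Q be a finite acyclic quiver. Define integer matrices N and A indexed by the vertex set Q₀ by N_{ab} = n_{ab} (the number of paths from a to b) and A_{ab} = the number of arrows from a to b. Then N·(1 − A) = 1 and (1 − A)·N = 1; in particular the Cartan matrix N is invertible over ℤ with inverse 1 − A. -/

import Mathlib

/-!
Splitting a path from `a` to `b` off at its last arrow gives the recursion
`n_ab = δ_ab + ∑_c n_ac · #(c ⟶ b)`, i.e. `N = 1 + N * A`, hence `N * (1 - A) = 1`; over the
commutative ring `ℤ` a one-sided inverse of a square matrix is two-sided. Acyclicity is what
makes the path counts finite: the arrow relation of a finite acyclic quiver is well-founded, so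
finiteness of `Path a b` follows by well-founded induction on `b` along the same recursion.
-/

open Quiver

namespace Quiver.Path

variable {V : Type*} [Quiver V]

def equivNilSumCons (a b : V) :
    Path a b ≃ PLift (a = b) ⊕ Σ c : V, Path a c × (c ⟶ b) where
  toFun
    | .nil => .inl ⟨rfl⟩
    | .cons p e => .inr ⟨_, p, e⟩
  invFun
    | .inl h => h.down ▸ .nil
    | .inr ⟨_, p, e⟩ => p.cons e
  left_inv p := by cases p <;> rfl
  right_inv := by rintro (⟨⟨rfl⟩⟩ | ⟨c, p, e⟩) <;> rfl

theorem exists_length_pos_of_transGen {c d : V}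
    (h : Relation.TransGen (fun c d : V => Nonempty (c ⟶ d)) c d) :
    ∃ p : Path c d, 0 < p.length := by
  induction h with
  | single he =>
    obtain ⟨e⟩ := he
    exact ⟨e.toPath, Nat.one_pos⟩
  | tail _ he ih =>
    obtain ⟨e⟩ := he
    obtain ⟨p, -⟩ := ih
    exact ⟨p.cons e, Nat.succ_pos _⟩

end Quiver.Path

section Acyclic

variable {V : Type*} [Quiver V]

theorem wellFounded_nonempty_hom_of_acyclic [Finite V]
    (hacyclic : ∀ (v : V) (p : Path v v), p.length = 0) :
    WellFounded (fun c d : V => Nonempty (c ⟶ d)) := by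
  have : Std.Irrefl (Relation.TransGen fun c d : V => Nonempty (c ⟶ d)) := ⟨fun v hv => by
    obtain ⟨p, hp⟩ := Path.exists_length_pos_of_transGen hv
    exact hp.ne' (hacyclic v p)⟩
  exact Subrelation.wf (fun h => Relation.TransGen.single h)
    (Finite.wellFounded_of_trans_of_irrefl (Relation.TransGen fun c d : V => Nonempty (c ⟶ d)))

theorem finite_path_of_acyclic [Finite V] [∀ a b : V, Finite (a ⟶ b)]
    (hacyclic : ∀ (v : V) (p : Path v v), p.length = 0) (a b : V) : Finite (Path a b) := by
  induction b using (wellFounded_nonempty_hom_of_acyclic hacyclic).induction with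
  | _ b ih =>
    have (c : V) : Finite (Path a c × (c ⟶ b)) := by
      rcases isEmpty_or_nonempty (c ⟶ b) with hcb | hcb
      · infer_instance
      · have := ih c hcb
        infer_instance
    exact Finite.of_equiv _ (Path.equivNilSumCons a b).symm

theorem natCard_path_eq_of_acyclic [Fintype V] [DecidableEq V] [∀ a b : V, Finite (a ⟶ b)]
    (hacyclic : ∀ (v : V) (p : Path v v), p.length = 0) (a b : V) :
    Nat.card (Path a b) =
      (if a = b then 1 else 0) + ∑ c : V, Nat.card (Path a c) * Nat.card (c ⟶ b) := by
  have := finite_path_of_acyclic hacyclic a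
  rw [Nat.card_congr (Path.equivNilSumCons a b), Nat.card_sum, Nat.card_sigma]
  simp only [Nat.card_prod]
  split_ifs with hab
  · subst hab
    simp
  · simp [hab]

end Acyclic

/-- For a finite acyclic quiver, the Cartan matrix `N` (counting paths)
and the adjacency matrix `A` (counting arrows) satisfy `N * (1 - A) = 1` and
`(1 - A) * N = 1`; in particular `N` is invertible over `ℤ` with inverse `1 - A`. -/
theorem cartan_mul_one_sub_adjacency
    (V : Type) [Quiver V] [Fintype V] [DecidableEq V] [∀ a b : V, Fintype (a ⟶ b)]
    (hacyclic : ∀ (v : V) (p : Quiver.Path v v), p.length = 0)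
    (N A : Matrix V V ℤ)
    (hN : ∀ a b : V, N a b = Nat.card (Quiver.Path a b))
    (hA : ∀ a b : V, A a b = Fintype.card (a ⟶ b)) :
    N * (1 - A) = 1 ∧ (1 - A) * N = 1 := by
  have hNA : N = 1 + N * A := by
    ext a b
    simp only [Matrix.add_apply, Matrix.one_apply, Matrix.mul_apply, hN, hA,
      natCard_path_eq_of_acyclic hacyclic a b, ← Nat.card_eq_fintype_card]
    push_cast
    rfl
  have hright : N * (1 - A) = 1 := by
    rw [mul_sub, mul_one, sub_eq_iff_eq_add]
    exact hNA
  exact ⟨hright, mul_eq_one_comm.mp hright⟩
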